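/- Monotonic price-increasing (Lemma 1): for any initial mempool state st₀ and any finite list of arriving transactions ta₁, …, taₙ (each not already in the pool at its arrival), the final state stₙ obtained by iterating the saferAd-CP admission step satisfies Σ_{tx ∈ stₙ} tx.price ≥ Σ_{tx ∈ st₀} tx.price. -/
import Mathlib


/-- A transaction: sender, nonce (naturals) and a nonnegative rational price. -/
structure Tx where
  sender : ℕ
  nonce : ℕ
  price : ℚ≥0
deriving DecidableEq

instance : DecidableRel ((· ≤ ·) : ℚ≥0 → ℚ≥0 → Prop) :=
  fun a b => decidable_of_iff ((a : ℚ) ≤ (b : ℚ)) (by exact_mod_cast Iff.rfl)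

/-- `tx₁` is an ancestor of `tx₂`. -/
def Ancestor (tx₁ tx₂ : Tx) : Prop :=
  tx₁.sender = tx₂.sender ∧ tx₁.nonce < tx₂.nonce

instance (tx₁ tx₂ : Tx) : Decidable (Ancestor tx₁ tx₂) :=
  decidable_of_iff (tx₁.sender = tx₂.sender ∧ tx₁.nonce < tx₂.nonce) Iff.rfl

/-- `te` is a childless transaction in the mempool state `st`. -/
def Childless (te : Tx) (st : Finset Tx) : Prop :=
  te ∈ st ∧ ∀ tx ∈ st, ¬ Ancestor te tx

/-- `pick` selects, from any nonempty mempool state, a childless transaction of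
minimum price among the childless transactions of the state. -/
def ValidPick (pick : Finset Tx → Tx) : Prop :=
  ∀ st : Finset Tx, st.Nonempty →
    Childless (pick st) st ∧ ∀ tx : Tx, Childless tx st → (pick st).price ≤ tx.price

/-- The saferAd-CP admission step with capacity `m`, eviction candidate chosen by `pick`. -/
def adTx (m : ℕ) (pick : Finset Tx → Tx) (st : Finset Tx) (ta : Tx) : Finset Tx :=
  if st.card < m then insert ta st
  else if ta.price ≤ (pick st).price then st
  else insert ta (st.erase (pick st))

/-- The state after processing the list of arriving transactions `ops` from `st₀`. -/
def run (m : ℕ) (pick : Finset Tx → Tx) (st₀ : Finset Tx) (ops : List Tx) : Finset Tx :=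
  ops.foldl (adTx m pick) st₀


lemma adTx_price_mono (m : ℕ) (pick : Finset Tx → Tx) (hpick : ValidPick pick)
    (st : Finset Tx) (ta : Tx) (hta : ta ∉ st) :
    ∑ tx ∈ st, tx.price ≤ ∑ tx ∈ adTx m pick st ta, tx.price := by
  unfold adTx
  split_ifs with h1 h2
  · rw [Finset.sum_insert hta]; exact le_add_self
  · exact le_refl _
  · rcases Finset.eq_empty_or_nonempty st with rfl | hne
    · simp
    · have hmem : pick st ∈ st := (hpick st hne).1.1
      have hsplit : ∑ tx ∈ st, tx.price
          = (pick st).price + ∑ tx ∈ st.erase (pick st), tx.price :=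
        (Finset.add_sum_erase st (fun tx => tx.price) hmem).symm
      have hta' : ta ∉ st.erase (pick st) := fun h => hta (Finset.mem_of_mem_erase h)
      rw [Finset.sum_insert hta', hsplit]
      exact add_le_add (le_of_not_ge h2) (le_refl _)

/-- Lemma 1, monotonic price-increasing: iterating the saferAd-CP
admission step over any finite list of arriving transactions (each not already in
the pool at its arrival) never decreases the sum of transaction prices. -/
theorem run_price_mono (m : ℕ) (pick : Finset Tx → Tx) (hpick : ValidPick pick)
    (st₀ : Finset Tx) (ops : List Tx)
    (hfresh : ∀ (pre : List Tx) (ta : Tx) (post : List Tx),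
      ops = pre ++ ta :: post → ta ∉ run m pick st₀ pre) :
    ∑ tx ∈ st₀, tx.price ≤ ∑ tx ∈ run m pick st₀ ops, tx.price := by
  induction ops generalizing st₀ with
  | nil => exact le_refl _
  | cons ta tail ih =>
    have h0 : ta ∉ st₀ := hfresh [] ta tail rfl
    have step := adTx_price_mono m pick hpick st₀ ta h0
    have : run m pick st₀ (ta :: tail) = run m pick (adTx m pick st₀ ta) tail := rfl
    rw [this]
    refine le_trans step (ih (adTx m pick st₀ ta) ?_)
    intro pre tb post hpre
    exact hfresh (ta :: pre) tb post (by rw [hpre]; rfl)
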